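/- Let $A$ be a group, $B$ a subgroup of $A$, and $C$ a normal subgroup of $A$. Let $M$ be a $B$-module (say, over $\mathbb{Z}$, with $B$ acting by automorphisms). Then there is an isomorphism of $A/C$-modules $(\mathrm{Ind}_B^A M)^C \cong \mathrm{Ind}_{B/(B\cap C)}^{A/C}(M^{B\cap C})$, where $\mathrm{Ind}_B^A M$ denotes the module of functions $f: A \to M$ with $f(ba) = b\cdot f(a)$ for $b \in B$, with $A$ acting by right translation, and $(-)^C$ denotes $C$-invariants. -/

import Mathlib

/-- `Ind_B^A M`: functions `f : A → M` with `f (b * a) = b • f a`, intersected with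
the `C`-invariants for the right-translation action of `A`. -/
abbrev IndModC (A : Type) [Group A] (B C : Subgroup A) (M : Type) [AddCommGroup M]
    [DistribMulAction B M] : Type :=
  {f : A → M // (∀ (b : B) (a : A), f (↑b * a) = b • f a) ∧
    ∀ c ∈ C, ∀ x : A, f (x * c) = f x}

/-- `Ind_{B/(B∩C)}^{A/C} (M^{B∩C})`: functions on `A ⧸ C` valued in the
`B ∩ C`-fixed points of `M`, equivariant for `B` (i.e. for `B/(B∩C)`). -/
abbrev IndModQ (A : Type) [Group A] (B C : Subgroup A) (M : Type) [AddCommGroup M]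
    [DistribMulAction B M] : Type :=
  {g : A ⧸ C → M // (∀ (b : B) (x : A), g ((↑b * x : A) : A ⧸ C) = b • g ((x : A ⧸ C))) ∧
    ∀ b : B, (b : A) ∈ C → ∀ y : A ⧸ C, b • g y = g y}

/-! A `C`-invariant `B`-equivariant function takes values in `M^{B ∩ C}` because, for `C`
normal, `b x = x (x⁻¹ b x)` with `x⁻¹ b x ∈ C` whenever `b ∈ C`. So `f ↦ (xC ↦ f x)` lands
in the induced module of `M^{B ∩ C}`, and composing with `A → A ⧸ C` inverts it. -/

namespace QuotientGroup

variable {A X : Type*} [Group A] (C : Subgroup A)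

def liftRightInvariant (f : A → X) (hf : ∀ c ∈ C, ∀ x, f (x * c) = f x) : A ⧸ C → X :=
  Quotient.lift f fun x y hxy => by
    simpa using (hf _ (leftRel_apply.mp hxy) x).symm

end QuotientGroup

section InducedInvariants

variable {A : Type} [Group A] {B C : Subgroup A} {M : Type} [AddCommGroup M]
  [DistribMulAction B M]

theorem IndModC.smul_apply_eq_of_mem [C.Normal] (f : IndModC A B C M) {b : B}
    (hb : (b : A) ∈ C) (x : A) : b • f.1 x = f.1 x := by
  have hconj : x⁻¹ * b * x ∈ C := by simpa using Subgroup.Normal.conj_mem' ‹_› _ hb x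
  calc b • f.1 x = f.1 (b * x) := (f.2.1 b x).symm
    _ = f.1 (x * (x⁻¹ * b * x)) := by group
    _ = f.1 x := f.2.2 _ hconj x

variable (A B C M) in
def indInvariantsEquiv [C.Normal] : IndModC A B C M ≃ IndModQ A B C M where
  toFun f := ⟨QuotientGroup.liftRightInvariant C f.1 f.2.2, f.2.1,
    fun _ hb y => QuotientGroup.induction_on y (f.smul_apply_eq_of_mem hb)⟩
  invFun g := ⟨fun x => g.1 x, g.2.1, fun _ hc x => by
    simp only [QuotientGroup.mk_mul_of_mem x hc]⟩
  left_inv _ := rfl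
  right_inv g := Subtype.ext <| funext fun y => QuotientGroup.induction_on y fun _ => rfl

end InducedInvariants

/-- The `C`-invariants of `Ind_B^A M` are isomorphic, as `A ⧸ C`-modules, to
`Ind_{B/(B∩C)}^{A/C} (M^{B∩C})`, via `f ↦ (gC ↦ f g)`. -/
theorem invariants_of_induced_iso (A : Type) [Group A] (B C : Subgroup A) [C.Normal]
    (M : Type) [AddCommGroup M] [DistribMulAction B M] :
    ∃ e : IndModC A B C M ≃ IndModQ A B C M,
      -- the isomorphism is `f ↦ (gC ↦ f g)`
      (∀ (f : IndModC A B C M) (x : A), (e f).1 ((x : A ⧸ C)) = f.1 x) ∧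
      -- it is additive
      (∀ f g h : IndModC A B C M, (∀ x : A, h.1 x = f.1 x + g.1 x) →
        ∀ y : A ⧸ C, (e h).1 y = (e f).1 y + (e g).1 y) ∧
      -- it is `A ⧸ C`-equivariant (the action is by right translation)
      (∀ (f f' : IndModC A B C M) (a : A), (∀ x : A, f'.1 x = f.1 (x * a)) →
        ∀ y : A ⧸ C, (e f').1 y = (e f).1 (y * ((a : A ⧸ C)))) :=
  ⟨indInvariantsEquiv A B C M, fun _ _ => rfl,
    fun _ _ _ hadd y => QuotientGroup.induction_on y hadd,
    fun _ _ _ htrans y => QuotientGroup.induction_on y htrans⟩
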